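/- Angle measures in the model are realized as dihedral angles of planes through the origin, hence the sum of the three angle measures of any triangle of the model (formed by three pairwise intersecting five-point lines with no common point) equals the angle sum of a spherical triangle on the unit sphere centered at O, and is therefore strictly greater than π. -/

import Mathlib

/-!
The angle of a spherical triangle `v₁ v₂ v₃` at `v₁` is `π` minus the angle between the normals
`v₁ × v₂` and `v₃ × v₁` of its two sides through `v₁`, i.e. `π` minus a side of the polar
triangle. The three normals are again linearly independent, so by the strict triangle inequality
for angles the sides of the polar triangle add up to less than `2π`, and the angle sum of the
original triangle exceeds `3π - 2π = π`.
-/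

open Real RealInnerProductSpace

noncomputable section

/-- The spherical angle of the spherical triangle `A B C` at the vertex `A` (for unit
vectors), i.e. the angle between the tangent directions at `A` towards `B` and `C`;
it equals the dihedral angle of the two planes through the origin spanned by `A, B` and
by `A, C`. -/
def sphericalAngle (A B C : EuclideanSpace ℝ (Fin 3)) : ℝ :=
  InnerProductGeometry.angle (B - ⟪A, B⟫ • A) (C - ⟪A, C⟫ • A)

open InnerProductGeometry
open scoped Matrix

namespace InnerProductGeometry

variable {V W : Type*} [NormedAddCommGroup V] [InnerProductSpace ℝ V]
  [NormedAddCommGroup W] [InnerProductSpace ℝ W]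

theorem angle_eq_angle_of_inner_eq {p q : V} {r s : W} (hpq : ⟪p, q⟫ = ⟪r, s⟫)
    (hp : ⟪p, p⟫ = ⟪r, r⟫) (hq : ⟪q, q⟫ = ⟪s, s⟫) : angle p q = angle r s := by
  simp only [angle, norm_eq_sqrt_real_inner, hpq, hp, hq]

theorem inner_sub_inner_smul_sub_inner_smul {a : V} (ha : ‖a‖ = 1) (b c : V) :
    ⟪b - ⟪a, b⟫ • a, c - ⟪a, c⟫ • a⟫ = ⟪b, c⟫ - ⟪a, b⟫ * ⟪a, c⟫ := by
  simp only [inner_sub_left, inner_sub_right, real_inner_smul_left, real_inner_smul_right,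
    inner_self_eq_one_of_norm_eq_one ha, real_inner_comm a]
  ring

theorem angle_lt_angle_add_angle_of_linearIndependent {x y z : V}
    (h : LinearIndependent ℝ ![x, y, z]) : angle x z < angle x y + angle y z := by
  refine (angle_le_angle_add_angle x y z).lt_of_ne fun heq => ?_
  rw [angle_eq_angle_add_angle_iff (y := y) (h.ne_zero 1)] at heq
  rw [Fintype.linearIndependent_iff] at h
  rcases heq with hxz | hy
  · obtain ⟨-, r, -, rfl⟩ := angle_eq_pi_iff.mp hxz
    simpa using h ![r, 0, -1] (by simp [Fin.sum_univ_three]) 2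
  · obtain ⟨kx, kz, rfl⟩ := Submodule.mem_span_pair.mp hy
    simpa using h ![kx, -1, kz] (by simp [Fin.sum_univ_three, NNReal.smul_def]) 1

theorem angle_add_angle_add_angle_lt_two_pi {x y z : V}
    (h : LinearIndependent ℝ ![x, y, z]) : angle x y + angle y z + angle z x < 2 * π := by
  have h' : LinearIndependent ℝ ![x, -y, z] := by
    convert h.units_smul ![1, -1, 1] using 1
    ext i : 1
    fin_cases i <;> simp
  have := angle_lt_angle_add_angle_of_linearIndependent h'
  rw [angle_neg_right, angle_neg_left, angle_comm x z] at this
  linarith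

end InnerProductGeometry

namespace EuclideanSpace

def cross (u v : EuclideanSpace ℝ (Fin 3)) : EuclideanSpace ℝ (Fin 3) :=
  WithLp.toLp 2 (u.ofLp ⨯₃ v.ofLp)

variable (u v w x : EuclideanSpace ℝ (Fin 3))

@[simp]
theorem ofLp_cross : (cross u v).ofLp = u.ofLp ⨯₃ v.ofLp := rfl

theorem inner_eq_dotProduct : ⟪u, v⟫ = u.ofLp ⬝ᵥ v.ofLp := by
  rw [inner_eq_star_dotProduct, star_trivial, dotProduct_comm]

theorem cross_anticomm : cross v u = -cross u v := by
  rw [cross, cross, ← _root_.cross_anticomm]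
  rfl

theorem inner_cross_self_left : ⟪cross u v, u⟫ = 0 := by
  rw [inner_eq_dotProduct, dotProduct_comm, ofLp_cross, dot_self_cross]

theorem inner_cross_self_right : ⟪cross u v, v⟫ = 0 := by
  rw [inner_eq_dotProduct, dotProduct_comm, ofLp_cross, dot_cross_self]

theorem inner_cross_cyclic : ⟪cross u v, w⟫ = ⟪cross v w, u⟫ := by
  rw [inner_eq_dotProduct, inner_eq_dotProduct, dotProduct_comm, dotProduct_comm _ u.ofLp,
    ofLp_cross, ofLp_cross, triple_product_permutation]

theorem inner_cross_cross :
    ⟪cross u v, cross w x⟫ = ⟪u, w⟫ * ⟪v, x⟫ - ⟪u, x⟫ * ⟪v, w⟫ := by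
  simp only [inner_eq_dotProduct, ofLp_cross, cross_dot_cross]

variable {u v w}

theorem inner_cross_ne_zero (h : LinearIndependent ℝ ![u, v, w]) : ⟪cross u v, w⟫ ≠ 0 := by
  have hofLp : WithLp.ofLp ∘ ![u, v, w] = ![u.ofLp, v.ofLp, w.ofLp] := by
    ext i : 1
    fin_cases i <;> rfl
  have hrows : LinearIndependent ℝ ![u.ofLp, v.ofLp, w.ofLp] := by
    simpa [WithLp.coe_linearEquiv, hofLp] using
      h.map' _ (WithLp.linearEquiv 2 ℝ (Fin 3 → ℝ)).ker
  rw [inner_cross_cyclic, inner_eq_dotProduct, dotProduct_comm, ofLp_cross, triple_product_eq_det]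
  exact ((Matrix.isUnit_iff_isUnit_det _).mp
    (Matrix.linearIndependent_rows_iff_isUnit.mp hrows)).ne_zero

theorem linearIndependent_cross (h : LinearIndependent ℝ ![u, v, w]) :
    LinearIndependent ℝ ![cross v w, cross w u, cross u v] := by
  have hD := inner_cross_ne_zero h
  have hu : ⟪cross v w, u⟫ = ⟪cross u v, w⟫ := (inner_cross_cyclic u v w).symm
  have hv : ⟪cross w u, v⟫ = ⟪cross u v, w⟫ := inner_cross_cyclic w u v
  rw [Fintype.linearIndependent_iff]
  intro g hg i
  have hi := congrArg (fun t => ⟪t, ![u, v, w] i⟫) hg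
  fin_cases i <;>
    simpa [Fin.sum_univ_three, inner_add_left, real_inner_smul_left, inner_cross_self_left,
      inner_cross_self_right, hu, hv, hD] using hi

end EuclideanSpace

open EuclideanSpace

/-- By Lagrange's identity the tangent directions at `A` and their images under `A × ·`
have the same Gram matrix. -/
theorem sphericalAngle_eq_angle_cross {A : EuclideanSpace ℝ (Fin 3)} (hA : ‖A‖ = 1)
    (B C : EuclideanSpace ℝ (Fin 3)) : sphericalAngle A B C = angle (cross A B) (cross A C) := by
  have hGram : ∀ X Y, ⟪X - ⟪A, X⟫ • A, Y - ⟪A, Y⟫ • A⟫ = ⟪cross A X, cross A Y⟫ := fun X Y => by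
    rw [inner_sub_inner_smul_sub_inner_smul hA, inner_cross_cross,
      inner_self_eq_one_of_norm_eq_one hA, real_inner_comm X A]
    ring
  exact angle_eq_angle_of_inner_eq (hGram B C) (hGram B B) (hGram C C)

theorem sphericalAngle_eq_pi_sub_angle_cross {A : EuclideanSpace ℝ (Fin 3)} (hA : ‖A‖ = 1)
    (B C : EuclideanSpace ℝ (Fin 3)) :
    sphericalAngle A B C = π - angle (cross A B) (cross C A) := by
  rw [sphericalAngle_eq_angle_cross hA, EuclideanSpace.cross_anticomm C A, angle_neg_right]

/-- The angles of a triangle of the model are the dihedral angles of the three planes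
through the origin cutting out its sides, i.e. the spherical angles of the spherical
triangle whose vertices are unit vectors along the pairwise intersections of the planes;
for any nondegenerate configuration (three planes with non-horizontal, linearly
independent normals) this angle sum strictly exceeds `π`. -/
theorem model_triangle_angle_sum_gt_pi :
    ∀ n₁ n₂ n₃ v₁ v₂ v₃ : EuclideanSpace ℝ (Fin 3),
      n₁ 2 ≠ 0 → n₂ 2 ≠ 0 → n₃ 2 ≠ 0 →
      ‖v₁‖ = 1 → ‖v₂‖ = 1 → ‖v₃‖ = 1 →
      ⟪n₂, v₁⟫ = 0 → ⟪n₃, v₁⟫ = 0 →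
      ⟪n₁, v₂⟫ = 0 → ⟪n₃, v₂⟫ = 0 →
      ⟪n₁, v₃⟫ = 0 → ⟪n₂, v₃⟫ = 0 →
      LinearIndependent ℝ ![v₁, v₂, v₃] →
      sphericalAngle v₁ v₂ v₃ + sphericalAngle v₂ v₃ v₁ + sphericalAngle v₃ v₁ v₂ > π := by
  intro _ _ _ v₁ v₂ v₃ _ _ _ h₁ h₂ h₃ _ _ _ _ _ _ hv
  rw [sphericalAngle_eq_pi_sub_angle_cross h₁, sphericalAngle_eq_pi_sub_angle_cross h₂,
    sphericalAngle_eq_pi_sub_angle_cross h₃]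
  have hpolar := angle_add_angle_add_angle_lt_two_pi (linearIndependent_cross hv)
  linarith [angle_comm (cross v₁ v₂) (cross v₃ v₁), angle_comm (cross v₂ v₃) (cross v₁ v₂),
    angle_comm (cross v₃ v₁) (cross v₂ v₃)]

end
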